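/- Let φ : ℝ^d → ℝ^N be twice continuously differentiable, let θ ∈ ℝ^N and c ∈ ℝ, and let q_θ(x) = exp(⟨θ, φ(x)⟩ + c). Then for every x ∈ ℝ^d the Hyvärinen score satisfies h(x, q_θ) := (1/2)‖∇_x log q_θ(x)‖₂² + Δ log q_θ(x) = (1/2) θᵀ A(x) θ + K(x)ᵀ θ, where A(x) := Σ_{i=1}^d (∂_i φ(x))(∂_i φ(x))ᵀ and K(x) := Σ_{i=1}^d ∂_i² φ(x). Moreover A(x) is symmetric positive semidefinite, so for each fixed x the map θ ↦ h(x, q_θ) is a convex quadratic function of the natural parameters. -/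

import Mathlib

/-- Partial derivative in coordinate `i`. -/
noncomputable def pd {d : ℕ} (i : Fin d) (f : (Fin d → ℝ) → ℝ) (x : Fin d → ℝ) : ℝ :=
  fderiv ℝ f x (Pi.single i 1)

/-- The Hyvärinen score `h(x,q) = (1/2)‖∇ log q(x)‖₂² + Δ log q(x)` on `ℝ^d`. -/
noncomputable def hyv {d : ℕ} (q : (Fin d → ℝ) → ℝ) (x : Fin d → ℝ) : ℝ :=
  (1/2) * ∑ i : Fin d, (pd i (fun y => Real.log (q y)) x)^2
    + ∑ i : Fin d, pd i (pd i (fun y => Real.log (q y))) x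

/-!
Since `log q_θ = ⟨θ, φ⟩ + c` is linear in `θ`, its gradient is `J(x) θ` for the Jacobian
`J(x)` of `φ` and its Laplacian is `K(x)ᵀ θ`. Hence `h(x, q_θ) = ½ ‖J(x) θ‖² + K(x)ᵀ θ`, and
`A(x) = J(x)ᵀ J(x)` is a Gram matrix, so positive semidefinite. A positive semidefinite quadratic
form `Q` is convex because `Q(a u + b v) = a Q(u) + b Q(v) - a b Q(u - v)` whenever `a + b = 1`.
-/

open Matrix

theorem Matrix.PosSemidef.convexOn_dotProduct_mulVec {𝕜 n : Type*} [Field 𝕜] [LinearOrder 𝕜]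
    [IsStrictOrderedRing 𝕜] [StarRing 𝕜] [TrivialStar 𝕜] [Fintype n]
    {A : Matrix n n 𝕜} (hA : A.PosSemidef) : ConvexOn 𝕜 Set.univ fun v => v ⬝ᵥ A *ᵥ v := by
  refine ⟨convex_univ, fun u _ v _ a b ha hb hab => ?_⟩
  obtain rfl : b = 1 - a := by linear_combination hab
  have hdiff : 0 ≤ (u - v) ⬝ᵥ A *ᵥ (u - v) := by
    simpa using hA.dotProduct_mulVec_nonneg (u - v)
  have hsplit : (a • u + (1 - a) • v) ⬝ᵥ A *ᵥ (a • u + (1 - a) • v)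
      = a * (u ⬝ᵥ A *ᵥ u) + (1 - a) * (v ⬝ᵥ A *ᵥ v)
        - a * (1 - a) * ((u - v) ⬝ᵥ A *ᵥ (u - v)) := by
    simp only [mulVec_add, mulVec_sub, mulVec_smul, dotProduct_add, add_dotProduct,
      dotProduct_sub, sub_dotProduct, dotProduct_smul, smul_dotProduct, smul_eq_mul]
    ring
  simp only [smul_eq_mul, hsplit, sub_le_self_iff]
  exact mul_nonneg (mul_nonneg ha hb) hdiff

theorem sum_sum_mul_mul_eq_dotProduct_mulVec {R n : Type*} [NonUnitalSemiring R] [Fintype n]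
    (A : Matrix n n R) (v : n → R) :
    ∑ a, ∑ b, v a * A a b * v b = v ⬝ᵥ A *ᵥ v := by
  simp only [dotProduct, mulVec, Finset.mul_sum, mul_assoc]

theorem sum_sq_sum_mul_eq {R ι κ : Type*} [CommSemiring R] [Fintype ι] [Fintype κ]
    (g : ι → κ → R) (θ : κ → R) :
    ∑ i, (∑ a, θ a * g i a) ^ 2 = ∑ a, ∑ b, θ a * (∑ i, g i a * g i b) * θ b := by
  simp_rw [sq, Finset.sum_mul_sum, Finset.mul_sum, Finset.sum_mul]
  rw [Finset.sum_comm]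
  refine Finset.sum_congr rfl fun a _ => ?_
  rw [Finset.sum_comm]
  refine Finset.sum_congr rfl fun b _ => Finset.sum_congr rfl fun i _ => ?_
  ring

section PartialDerivative

variable {d : ℕ}

theorem pd_add_const (i : Fin d) (f : (Fin d → ℝ) → ℝ) (c : ℝ) :
    pd i (fun y => f y + c) = pd i f := by
  ext x
  simp only [pd, fderiv_add_const]

theorem pd_sum_mul {ι : Type*} [Fintype ι] (i : Fin d) {f : ι → (Fin d → ℝ) → ℝ}
    {x : Fin d → ℝ} (hf : ∀ a, DifferentiableAt ℝ (f a) x) (θ : ι → ℝ) :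
    pd i (fun y => ∑ a, θ a * f a y) x = ∑ a, θ a * pd i (f a) x := by
  simp [pd, fderiv_fun_sum fun a _ => (hf a).const_mul (θ a), fderiv_const_mul (hf _)]

theorem ContDiff.pd {n : WithTop ℕ∞} {f : (Fin d → ℝ) → ℝ} (hf : ContDiff ℝ (n + 1) f)
    (i : Fin d) : ContDiff ℝ n (pd i f) :=
  (hf.fderiv_right le_rfl).clm_apply contDiff_const

theorem hyv_exp (g : (Fin d → ℝ) → ℝ) (x : Fin d → ℝ) :
    hyv (fun y => Real.exp (g y)) x = (1/2) * ∑ i, pd i g x ^ 2 + ∑ i, pd i (pd i g) x := by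
  simp only [hyv, Real.log_exp]

theorem hyv_exp_sum_mul_add_const {ι : Type*} [Fintype ι] {f : ι → (Fin d → ℝ) → ℝ}
    (hf : ∀ a, ContDiff ℝ 2 (f a)) (θ : ι → ℝ) (c : ℝ) (x : Fin d → ℝ) :
    hyv (fun y => Real.exp (∑ a, θ a * f a y + c)) x
      = (1/2) * ∑ i, (∑ a, θ a * pd i (f a) x) ^ 2
        + ∑ a, (∑ i, pd i (pd i (f a)) x) * θ a := by
  have hgrad (i : Fin d) :
      pd i (fun y => ∑ a, θ a * f a y + c) = fun z => ∑ a, θ a * pd i (f a) z := by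
    rw [pd_add_const]
    exact funext fun z =>
      pd_sum_mul i (fun a => ((hf a).differentiable two_ne_zero).differentiableAt) θ
  have hlap (i : Fin d) :
      pd i (fun z => ∑ a, θ a * pd i (f a) z) x = ∑ a, θ a * pd i (pd i (f a)) x :=
    pd_sum_mul i
      (fun a => (((hf a).pd (n := 1) i).differentiable one_ne_zero).differentiableAt) θ
  rw [hyv_exp (fun y => ∑ a, θ a * f a y + c)]
  simp only [hgrad, hlap]
  rw [Finset.sum_comm]
  simp only [Finset.mul_sum, mul_comm]

end PartialDerivative

/-- For the exponential family `q_θ(x) = exp(⟨θ, φ(x)⟩ + c)` with `φ` twice continuously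
differentiable, the Hyvärinen score is the quadratic `h(x,q_θ) = (1/2) θᵀA(x)θ + K(x)ᵀθ`,
with `A(x) = ∑ i (∂_i φ)(∂_i φ)ᵀ` symmetric positive semidefinite and
`K(x) = ∑ i ∂_i² φ`; hence `θ ↦ h(x,q_θ)` is a convex quadratic in the natural
parameters. -/
theorem stmt3 {d N : ℕ} (φ : (Fin d → ℝ) → Fin N → ℝ) (hφ : ContDiff ℝ 2 φ)
    (θ : Fin N → ℝ) (c : ℝ) :
    (∀ x : Fin d → ℝ,
      hyv (fun y => Real.exp ((∑ a : Fin N, θ a * φ y a) + c)) x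
        = (1/2) * (∑ a : Fin N, ∑ b : Fin N,
              θ a * (∑ i : Fin d, pd i (fun y => φ y a) x * pd i (fun y => φ y b) x) * θ b)
          + ∑ a : Fin N, (∑ i : Fin d, pd i (pd i (fun y => φ y a)) x) * θ a)
    ∧ (∀ x : Fin d → ℝ,
        (Matrix.of fun a b : Fin N =>
          ∑ i : Fin d, pd i (fun y => φ y a) x * pd i (fun y => φ y b) x).IsSymm)
    ∧ (∀ x : Fin d → ℝ,
        (Matrix.of fun a b : Fin N =>
          ∑ i : Fin d, pd i (fun y => φ y a) x * pd i (fun y => φ y b) x).PosSemidef)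
    ∧ (∀ x : Fin d → ℝ,
        ConvexOn ℝ Set.univ (fun θ' : Fin N → ℝ =>
          hyv (fun y => Real.exp ((∑ a : Fin N, θ' a * φ y a) + c)) x)) := by
  set J : (Fin d → ℝ) → Matrix (Fin d) (Fin N) ℝ := fun x =>
    Matrix.of fun i a => pd i (fun y => φ y a) x
  set A : (Fin d → ℝ) → Matrix (Fin N) (Fin N) ℝ := fun x =>
    Matrix.of fun a b => ∑ i, pd i (fun y => φ y a) x * pd i (fun y => φ y b) x
  have score (θ : Fin N → ℝ) (x : Fin d → ℝ) :
      hyv (fun y => Real.exp ((∑ a, θ a * φ y a) + c)) x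
        = (1/2) * ∑ a, ∑ b, θ a * A x a b * θ b
          + ∑ a, (∑ i, pd i (pd i (fun y => φ y a)) x) * θ a := by
    rw [hyv_exp_sum_mul_add_const (contDiff_pi.mp hφ), sum_sq_sum_mul_eq]
    rfl
  have psd (x : Fin d → ℝ) : (A x).PosSemidef := by
    have gram : A x = (J x)ᴴ * J x := by
      ext a b
      simp [A, J, Matrix.mul_apply]
    exact gram ▸ posSemidef_conjTranspose_mul_self (J x)
  refine ⟨score θ, fun x => (psd x).isHermitian, psd, fun x => ?_⟩
  simp only [score, sum_sum_mul_mul_eq_dotProduct_mulVec]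
  exact ((psd x).convexOn_dotProduct_mulVec.smul (by norm_num)).add
    ((dotProductBilin ℝ ℝ _).convexOn convex_univ)
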